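/- arXiv:1705.08971 — 2 statements merged into one kernel-verified Lean document; each statement's English description precedes it below -/
import Mathlib

section
/- Let n be a positive integer and S : Fin n → Fin n → ℝ a doubly stochastic matrix. Then ∑_{i,j} (S i j)² ≤ n, with equality if and only if S is a permutation matrix. Equivalently, (1/n) ∑_{i,j} (S i j)² = 1 if and only if there exists a permutation σ of Fin n with S i j = (if σ i = j then 1 else 0). -/
/-!
Every entry of a doubly stochastic matrix lies in `[0, 1]`, so `x ^ 2 ≤ x` entrywise and the
sum of the squares is at most the sum of the entries, which is `n`. Equality forces every entry
to be `0` or `1`; the row sums then put exactly one `1` in each row, at column `f i` say, and the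
column sums make `f` surjective, hence a permutation.
-/

open Finset

lemma exists_eq_ite_of_sum_eq_one {ι R : Type*} [Fintype ι] [DecidableEq ι]
    [AddCommMonoidWithOne R] [CharZero R] {v : ι → R} (h01 : ∀ j, v j = 0 ∨ v j = 1)
    (hv : ∑ j, v j = 1) : ∃ k, ∀ j, v j = if k = j then 1 else 0 := by
  classical
  have hv_boole : v = fun j => if v j = 1 then 1 else 0 :=
    funext fun j => by rcases h01 j with h | h <;> rw [h] <;> simp
  rw [hv_boole, sum_boole, Nat.cast_eq_one, card_eq_one] at hv
  obtain ⟨k, hk⟩ := hv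
  refine ⟨k, fun j => ?_⟩
  have hj : v j = 1 ↔ j = k := by simpa using congrArg (j ∈ ·) hk
  rcases h01 j with h | h
  · have hkj : k ≠ j := fun hkj => by simp [hj.2 hkj.symm] at h
    simp [h, hkj]
  · simp [h, (hj.1 h).symm]

namespace Matrix

variable {ι R : Type*} [DecidableEq ι]

lemma permMatrix_apply_eq_ite [Zero R] [One R] (σ : Equiv.Perm ι) (i j : ι) :
    σ.permMatrix R i j = if σ i = j then 1 else 0 := by
  simp [PEquiv.toMatrix_apply]

variable [Fintype ι] [Ring R] [LinearOrder R] [IsStrictOrderedRing R] {M : Matrix ι ι R}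

lemma mem_rowStochastic_of_mem_doublyStochastic (hM : M ∈ doublyStochastic R ι) :
    M ∈ rowStochastic R ι :=
  (mem_doublyStochastic_iff_mem_rowStochastic_and_mem_colStochastic.1 hM).1

lemma sq_le_self_of_mem_rowStochastic (hM : M ∈ rowStochastic R ι) (i j : ι) :
    M i j ^ 2 ≤ M i j :=
  pow_le_of_le_one (nonneg_of_mem_rowStochastic hM) (le_one_of_mem_rowStochastic hM) two_ne_zero

lemma sum_sum_eq_card_of_mem_rowStochastic (hM : M ∈ rowStochastic R ι) :
    ∑ i, ∑ j, M i j = Fintype.card ι := by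
  simp [sum_row_of_mem_rowStochastic hM]

lemma sum_sum_sq_le_card_of_mem_rowStochastic (hM : M ∈ rowStochastic R ι) :
    ∑ i, ∑ j, M i j ^ 2 ≤ Fintype.card ι :=
  sum_sum_eq_card_of_mem_rowStochastic hM ▸
    sum_le_sum fun i _ => sum_le_sum fun j _ => sq_le_self_of_mem_rowStochastic hM i j

lemma sum_sum_sq_eq_card_iff_of_mem_rowStochastic (hM : M ∈ rowStochastic R ι) :
    ∑ i, ∑ j, M i j ^ 2 = Fintype.card ι ↔ ∀ i j, M i j = 0 ∨ M i j = 1 := by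
  have hrow (i : ι) : ∑ j, M i j ^ 2 ≤ ∑ j, M i j :=
    sum_le_sum fun j _ => sq_le_self_of_mem_rowStochastic hM i j
  rw [← sum_sum_eq_card_of_mem_rowStochastic hM, sum_eq_sum_iff_of_le fun i _ => hrow i]
  simp only [mem_univ, true_imp_iff]
  refine forall_congr' fun i => ?_
  rw [sum_eq_sum_iff_of_le fun j _ => sq_le_self_of_mem_rowStochastic hM i j]
  simp only [mem_univ, true_imp_iff, sq, ← isIdempotentElem_iff,
    IsIdempotentElem.iff_eq_zero_or_one]

lemma sum_sum_sq_eq_card_iff_exists_perm (hM : M ∈ doublyStochastic R ι) :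
    ∑ i, ∑ j, M i j ^ 2 = Fintype.card ι ↔ ∃ σ : Equiv.Perm ι, σ.permMatrix R = M := by
  rw [sum_sum_sq_eq_card_iff_of_mem_rowStochastic (mem_rowStochastic_of_mem_doublyStochastic hM)]
  constructor
  · intro h01
    choose f hf using fun i =>
      exists_eq_ite_of_sum_eq_one (h01 i) (sum_row_of_mem_doublyStochastic hM i)
    have hsurj : Function.Surjective f := fun j => by
      obtain ⟨i, -, hi⟩ := exists_ne_zero_of_sum_ne_zero
        ((sum_col_of_mem_doublyStochastic hM j).symm ▸ one_ne_zero)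
      exact ⟨i, by_contra fun h => hi (by simp [hf, h])⟩
    refine ⟨Equiv.ofBijective f (Finite.surjective_iff_bijective.1 hsurj), ext fun i j => ?_⟩
    simp [hf]
  · rintro ⟨σ, rfl⟩ i j
    rw [permMatrix_apply_eq_ite]
    split_ifs <;> simp

end Matrix

open Matrix in
/-- for a doubly stochastic matrix `S`, `∑ i j, (S i j)² ≤ n`, with
equality iff `S` is a permutation matrix; equivalently
`(1/n) ∑ i j, (S i j)² = 1` iff `S` is a permutation matrix. -/
theorem doubly_stochastic_sq_sum (n : ℕ) (hn : 0 < n)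
    (S : Fin n → Fin n → ℝ)
    (hSnn : ∀ i j, 0 ≤ S i j)
    (hSrow : ∀ i, (∑ j, S i j) = 1) (hScol : ∀ j, (∑ i, S i j) = 1) :
    (∑ i, ∑ j, (S i j) ^ 2) ≤ (n : ℝ) ∧
    ((∑ i, ∑ j, (S i j) ^ 2) = (n : ℝ) ↔
      ∃ σ : Equiv.Perm (Fin n), ∀ i j, S i j = if σ i = j then 1 else 0) ∧
    ((1 / (n : ℝ)) * (∑ i, ∑ j, (S i j) ^ 2) = 1 ↔
      ∃ σ : Equiv.Perm (Fin n), ∀ i j, S i j = if σ i = j then 1 else 0) := by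
  have hS : (S : Matrix (Fin n) (Fin n) ℝ) ∈ doublyStochastic ℝ (Fin n) :=
    mem_doublyStochastic_iff_sum.2 ⟨hSnn, hSrow, hScol⟩
  have hperm : (∑ i, ∑ j, (S i j) ^ 2) = (n : ℝ) ↔
      ∃ σ : Equiv.Perm (Fin n), ∀ i j, S i j = if σ i = j then 1 else 0 := by
    have hperm_matrix := sum_sum_sq_eq_card_iff_exists_perm hS
    rw [Fintype.card_fin] at hperm_matrix
    rw [hperm_matrix]
    exact exists_congr fun σ => Matrix.ext_iff.symm.trans
      (forall₂_congr fun i j => by rw [permMatrix_apply_eq_ite, eq_comm])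
  have hle : (∑ i, ∑ j, (S i j) ^ 2) ≤ (n : ℝ) := by
    simpa using sum_sum_sq_le_card_of_mem_rowStochastic
      (mem_rowStochastic_of_mem_doublyStochastic hS)
  refine ⟨hle, hperm, ?_⟩
  rw [one_div, inv_mul_eq_one₀ (by positivity), eq_comm, hperm]
end

section
/- Let n be a positive integer and A : Fin n → Fin n → ℝ an arbitrary real matrix. Then A has exactly one nonzero diagonal (there is a unique permutation σ of Fin n with A i (σ i) ≠ 0 for all i) if and only if there exist permutations σ, τ of Fin n such that the matrix B defined by B i j = A (σ i) (τ j) satisfies B i i ≠ 0 for all i and B i j = 0 whenever i > j. -/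
/-!
If `A` has a unique nonzero diagonal, permute the columns so that it becomes the main diagonal
and draw an edge `i → j` (`i ≠ j`) whenever `A i j ≠ 0`. A directed cycle would give a second
nonzero diagonal (move along the cycle, fix everything else): concretely, a successor map along
the cycle is a bijection on its periodic points. So the graph is acyclic, and listing the indices
in a topological order makes `A` upper triangular. Conversely, read in triangular coordinates,
every nonzero diagonal `μ` satisfies `i ≤ μ i`, and such a permutation is the identity.
-/

open Finset Function Relation

theorem Equiv.Perm.eq_one_of_forall_le_apply {α : Type*} [PartialOrder α] [Finite α]
    (μ : Equiv.Perm α) (h : ∀ x, x ≤ μ x) : μ = 1 := by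
  ext x
  obtain ⟨k, hk, hper⟩ := mem_periodicPts.mp (μ.injective.mem_periodicPts x)
  refine le_antisymm ?_ (h x)
  calc μ x ≤ μ^[k - 1] (μ x) := id_le_iterate_of_id_le h _ _
    _ = x := by rw [← iterate_succ_apply, Nat.succ_eq_add_one, Nat.sub_add_cancel hk]; exact hper

theorem Function.exists_iterate_mem_periodicPts {α : Type*} [Finite α] (f : α → α) (x : α) :
    ∃ m, f^[m] x ∈ periodicPts f := by
  obtain ⟨m, m', hne, heq⟩ := Finite.exists_ne_map_eq_of_infinite (f^[·] x)
  wlog hlt : m < m' generalizing m m'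
  · exact this m' m hne.symm heq.symm (by omega)
  refine ⟨m, mk_mem_periodicPts (n := m' - m) (by omega) ?_⟩
  change f^[m' - m] (f^[m] x) = f^[m] x
  rw [← iterate_add_apply, Nat.sub_add_cancel hlt.le]
  exact heq.symm

theorem Function.exists_perm_eqOn_periodicPts {α : Type*} (f : α → α) :
    ∃ π : Equiv.Perm α, (∀ x ∈ periodicPts f, π x = f x) ∧ ∀ x ∉ periodicPts f, π x = x := by
  classical
  exact ⟨Equiv.Perm.ofSubtype (bijOn_periodicPts f).equiv,
    fun x hx => Equiv.Perm.ofSubtype_apply_of_mem _ hx,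
    fun x hx => Equiv.Perm.ofSubtype_apply_of_not_mem _ hx⟩

section UniquePerm

variable {α : Type*} {r : α → α → Prop}

theorem apply_eq_self_of_mem_periodicPts_of_unique (hrefl : ∀ x, r x x)
    (huniq : ∀ π : Equiv.Perm α, (∀ x, r x (π x)) → π = 1)
    {f : α → α} (hf : ∀ x, r x (f x)) {x : α} (hx : x ∈ periodicPts f) : f x = x := by
  obtain ⟨π, hπ_mem, hπ_notMem⟩ := exists_perm_eqOn_periodicPts f
  have hπ : π = 1 := huniq π fun y => by
    by_cases hy : y ∈ periodicPts f
    · simpa only [hπ_mem y hy] using hf y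
    · simpa only [hπ_notMem y hy] using hrefl y
  rw [← hπ_mem x hx, hπ, Equiv.Perm.one_apply]

theorem not_transGen_self_of_unique [Finite α] (hrefl : ∀ x, r x x)
    (huniq : ∀ π : Equiv.Perm α, (∀ x, r x (π x)) → π = 1) (a : α) :
    ¬ TransGen (fun x y => x ≠ y ∧ r x y) a a := by
  classical
  intro ha
  set S := {x | TransGen (fun x y => x ≠ y ∧ r x y) x a}
  have hsucc : ∀ x ∈ S, ∃ y ∈ S, x ≠ y ∧ r x y := by
    intro x hx
    obtain ⟨y, hxy, hya⟩ := TransGen.head'_iff.mp hx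
    rcases reflTransGen_iff_eq_or_transGen.mp hya with rfl | hya
    exacts [⟨a, ha, hxy⟩, ⟨y, hya, hxy⟩]
  choose! g hgS hg using hsucc
  set f : α → α := fun x => if x ∈ S then g x else x
  have hf : ∀ x, r x (f x) := fun x => by
    by_cases hx : x ∈ S
    · simpa only [f, if_pos hx] using (hg x hx).2
    · simpa only [f, if_neg hx] using hrefl x
  have hfS : Set.MapsTo f S S := fun x hx => by simpa only [f, if_pos hx] using hgS x hx
  obtain ⟨m, hm⟩ := exists_iterate_mem_periodicPts f a
  have hmS : f^[m] a ∈ S := hfS.iterate m ha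
  have hfix := apply_eq_self_of_mem_periodicPts_of_unique hrefl huniq hf hm
  simp only [f, if_pos hmS] at hfix
  exact (hg _ hmS).1 hfix.symm

end UniquePerm

theorem exists_rank_of_not_transGen_self {α : Type*} [Fintype α] {s : α → α → Prop}
    (h : ∀ a, ¬ TransGen s a a) : ∃ rk : α → ℕ, ∀ a b, s a b → rk a < rk b := by
  classical
  refine ⟨fun x => #{y | TransGen s y x}, fun a b hab => card_lt_card ⟨?_, fun hsub => ?_⟩⟩
  · intro y hy
    simp only [mem_filter, mem_univ, true_and] at hy ⊢
    exact hy.tail hab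
  · have := @hsub a (by simpa using TransGen.single hab)
    exact h a (by simpa using this)

theorem Tuple.exists_perm_lt_of_lt {n : ℕ} {β : Type*} [LinearOrder β] (rk : Fin n → β) :
    ∃ g : Equiv.Perm (Fin n), ∀ i j, rk (g i) < rk (g j) → i < j :=
  ⟨Tuple.sort rk, fun _ _ h => lt_of_not_ge fun hji => (Tuple.monotone_sort rk hji).not_gt h⟩

section Triangular

variable {M : Type*} [Zero M]

theorem existsUnique_nonzero_diagonal_of_triangular {ι : Type*} [LinearOrder ι] [Finite ι]
    {A : ι → ι → M} (σ τ : Equiv.Perm ι) (hdiag : ∀ i, A (σ i) (τ i) ≠ 0)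
    (htri : ∀ i j, j < i → A (σ i) (τ j) = 0) :
    ∃! ρ : Equiv.Perm ι, ∀ i, A i (ρ i) ≠ 0 := by
  refine ⟨σ.symm.trans τ, fun i => by simpa using hdiag (σ.symm i), fun ρ hρ => ?_⟩
  set μ : Equiv.Perm ι := σ.trans (ρ.trans τ.symm)
  have hμ : μ = 1 := μ.eq_one_of_forall_le_apply fun i => le_of_not_gt fun hlt =>
    hρ (σ i) (by simpa [μ] using htri i (μ i) hlt)
  ext x
  simpa [μ] using congrArg τ (DFunLike.congr_fun hμ (σ.symm x))

theorem exists_triangular_of_existsUnique_nonzero_diagonal {n : ℕ} {A : Fin n → Fin n → M}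
    (h : ∃! ρ : Equiv.Perm (Fin n), ∀ i, A i (ρ i) ≠ 0) :
    ∃ σ τ : Equiv.Perm (Fin n),
      (∀ i, A (σ i) (τ i) ≠ 0) ∧ ∀ i j : Fin n, j < i → A (σ i) (τ j) = 0 := by
  obtain ⟨ρ, hρ, huniq⟩ := h
  have huniq' : ∀ π : Equiv.Perm (Fin n), (∀ i, A i (ρ (π i)) ≠ 0) → π = 1 := fun π hπ =>
    mul_eq_left.mp (huniq (ρ * π) hπ)
  obtain ⟨rk, hrk⟩ := exists_rank_of_not_transGen_self
    (not_transGen_self_of_unique (r := fun i j => A i (ρ j) ≠ 0) hρ huniq')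
  obtain ⟨g, hg⟩ := Tuple.exists_perm_lt_of_lt rk
  refine ⟨g, g.trans ρ, fun i => hρ (g i), fun i j hji => ?_⟩
  by_contra hne
  exact (hg i j (hrk _ _ ⟨g.injective.ne hji.ne', hne⟩)).not_gt hji

end Triangular

theorem unique_nonzero_diagonal_iff_triangular_general (n : ℕ)
    (A : Fin n → Fin n → ℝ) :
    (∃! σ : Equiv.Perm (Fin n), ∀ i, A i (σ i) ≠ 0) ↔
      ∃ σ τ : Equiv.Perm (Fin n),
        (∀ i, A (σ i) (τ i) ≠ 0) ∧
        ∀ i j : Fin n, j < i → A (σ i) (τ j) = 0 :=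
  ⟨exists_triangular_of_existsUnique_nonzero_diagonal,
    fun ⟨σ, τ, hdiag, htri⟩ => existsUnique_nonzero_diagonal_of_triangular σ τ hdiag htri⟩

/-- an arbitrary real matrix `A` has exactly one nonzero diagonal
iff `A` is a permutation of an upper-triangular matrix (with nonzero main
diagonal). -/
theorem unique_nonzero_diagonal_iff_triangular (n : ℕ) (hn : 0 < n)
    (A : Fin n → Fin n → ℝ) :
    (∃! σ : Equiv.Perm (Fin n), ∀ i, A i (σ i) ≠ 0) ↔
      ∃ σ τ : Equiv.Perm (Fin n),
        (∀ i, A (σ i) (τ i) ≠ 0) ∧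
        ∀ i j : Fin n, j < i → A (σ i) (τ j) = 0 :=
  unique_nonzero_diagonal_iff_triangular_general n A
end
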